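/- arXiv:2309.07245 — 3 statements merged into one kernel-verified Lean document; each statement's English description precedes it below -/
import Mathlib

section
/- Let K be a field. Every degreewise injective chain map between unbounded chain complexes of K-vector spaces has the left lifting property with respect to every chain map that is both degreewise surjective and a quasi-isomorphism. (Equivalently: every chain complex of K-vector spaces is cofibrant, and every degreewise injection is a cofibration, in the projective model structure on unbounded chain complexes.) -/
/-!
STATEMENT 9: Over a field `K`, every degreewise injective chain map between unbounded
chain complexes of `K`-vector spaces has the left lifting property with respect to every
chain map that is both degreewise surjective and a quasi-isomorphism.
-/


open CategoryTheory CategoryTheory.Limits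

universe u

namespace DegreewiseLLP9

variable {K : Type u} [Field K] {X Y : ChainComplex (ModuleCat.{u} K) ℤ} (p : X ⟶ Y)

lemma comm_apply (m n : ℤ) (x : X.X m) :
    p.f n (X.d m n x) = Y.d m n (p.f m x) :=
  (congrArg (fun φ => φ.hom x) (p.comm m n)).symm

/-- The degreewise kernel subcomplex of `p`. -/
noncomputable def kerComplex : ChainComplex (ModuleCat.{u} K) ℤ where
  X n := ModuleCat.of K (LinearMap.ker (p.f n).hom)
  d m n := ModuleCat.ofHom <| LinearMap.codRestrict _ ((X.d m n).hom.comp (LinearMap.ker (p.f m).hom).subtype)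
    (fun x => by
      have h : p.f n (X.d m n x.1) = Y.d m n (p.f m x.1) := comm_apply p m n x.1
      have h2 : p.f m x.1 = 0 := x.2
      show p.f n (X.d m n x.1) = 0
      rw [h, h2, map_zero])
  shape m n h := by
    refine ModuleCat.hom_ext (LinearMap.ext fun x => ?_)
    have : X.d m n = 0 := X.shape m n h
    apply Subtype.ext
    show X.d m n x.1 = _
    rw [this]
    rfl
  d_comp_d' m n o _ _ := by
    refine ModuleCat.hom_ext (LinearMap.ext fun x => Subtype.ext ?_)
    show X.d n o (X.d m n x.1) = 0
    have h := congrArg (fun φ => φ.hom x.1) (X.d_comp_d m n o)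
    exact h

/-- The inclusion of the kernel complex. -/
noncomputable def kerι : kerComplex p ⟶ X where
  f n := ModuleCat.ofHom (LinearMap.ker (p.f n).hom).subtype
  comm' m n _ := rfl

lemma kerZero : kerι p ≫ p = 0 := by
  ext n x
  exact x.2

lemma kerComplex_shortExact (hp : ∀ n : ℤ, Function.Surjective (p.f n)) :
    (ShortComplex.mk (kerι p) p (kerZero p)).ShortExact := by
  rw [HomologicalComplex.shortExact_iff_degreewise_shortExact]
  intro n
  refine { exact := ?_, mono_f := ?_, epi_g := ?_ }
  · rw [ShortComplex.moduleCat_exact_iff]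
    intro x hx
    exact ⟨⟨x, hx⟩, rfl⟩
  · exact (ModuleCat.mono_iff_injective _).2 Subtype.val_injective
  · exact (ModuleCat.epi_iff_surjective _).2 (hp n)

lemma acyc (hp : ∀ n : ℤ, Function.Surjective (p.f n)) (hq : QuasiIso p)
    (n : ℤ) (w : X.X n) (hw : p.f n w = 0) (hdw : X.d n (n - 1) w = 0) :
    ∃ v : X.X (n + 1), p.f (n + 1) v = 0 ∧ X.d (n + 1) n v = w := by
  have hSE := kerComplex_shortExact p hp
  set S := ShortComplex.mk (kerι p) p (kerZero p) with hSdef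
  have rel : (ComplexShape.down ℤ).Rel (n + 1) n := by simp
  have hiso : ∀ m : ℤ, IsIso (HomologicalComplex.homologyMap p m) := fun m => by
    have := hq.1 m
    rwa [quasiIsoAt_iff_isIso_homologyMap] at this
  have hι : HomologicalComplex.homologyMap (kerι p) n = 0 := by
    have h0 : HomologicalComplex.homologyMap (kerι p) n ≫
        HomologicalComplex.homologyMap p n = 0 := by
      rw [← HomologicalComplex.homologyMap_comp, kerZero, HomologicalComplex.homologyMap_zero]
    have := hiso n
    rw [← cancel_mono (HomologicalComplex.homologyMap p n), h0, Limits.zero_comp]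
  have hδ : hSE.δ (n + 1) n rel = 0 := by
    have h0 := hSE.comp_δ (n + 1) n rel
    have := hiso (n + 1)
    rw [← cancel_epi (HomologicalComplex.homologyMap p (n + 1)), Limits.comp_zero]
    exact h0
  have hex := hSE.homology_exact₁ (n + 1) n rel
  have hzero : IsZero ((kerComplex p).homology n) := hex.isZero_X₂ hδ hι
  have hexact : (kerComplex p).ExactAt n :=
    (HomologicalComplex.exactAt_iff_isZero_homology _ _).2 hzero
  rw [HomologicalComplex.exactAt_iff' (kerComplex p) (n + 1) n (n - 1) (by simp) (by simp),
    ShortComplex.moduleCat_exact_iff] at hexact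
  obtain ⟨v, hv⟩ := hexact ⟨w, hw⟩ (Subtype.ext hdw)
  exact ⟨v.1, v.2, congrArg Subtype.val hv⟩

lemma d_d (m n o : ℤ) (x : X.X m) : X.d n o (X.d m n x) = 0 :=
  congrArg (fun φ => φ.hom x) (X.d_comp_d m n o)

set_option synthInstance.maxHeartbeats 1000000 in
lemma exists_s (hp : ∀ n : ℤ, Function.Surjective (p.f n)) (hq : QuasiIso p) (a b : ℤ) :
    ∃ s : X.X a →ₗ[K] X.X b,
      (∀ x, p.f b (s x) = 0) ∧
      (a + 1 = b → ∀ z : X.X a, p.f a z = 0 → X.d a (a - 1) z = 0 → X.d b a (s z) = z) := by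
  by_cases hab : a + 1 = b
  · subst hab
    set Zc : Submodule K (X.X a) :=
      LinearMap.ker (p.f a).hom ⊓ LinearMap.ker (X.d a (a - 1)).hom with hZc
    obtain ⟨C, hC⟩ := Submodule.exists_isCompl Zc
    let π := Submodule.linearProjOfIsCompl Zc C hC
    have hmem : ∀ v : LinearMap.ker (p.f (a + 1)).hom, X.d (a + 1) a v.1 ∈ Zc := fun v => by
      refine Submodule.mem_inf.2 ⟨?_, ?_⟩
      · show p.f a (X.d (a + 1) a v.1) = 0
        rw [comm_apply, v.2, map_zero]
      · show X.d a (a - 1) (X.d (a + 1) a v.1) = 0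
        exact d_d (a + 1) a (a - 1) v.1
    let dW : LinearMap.ker (p.f (a + 1)).hom →ₗ[K] Zc :=
      LinearMap.codRestrict Zc
        ((X.d (a + 1) a).hom.comp (LinearMap.ker (p.f (a + 1)).hom).subtype) hmem
    have hsurj : Function.Surjective dW := by
      rintro ⟨z, hz⟩
      obtain ⟨hz1, hz2⟩ := Submodule.mem_inf.1 hz
      obtain ⟨v, hv0, hdv⟩ := acyc p hp hq a z hz1 hz2
      exact ⟨⟨v, hv0⟩, Subtype.ext hdv⟩
    haveI : Module.Projective K Zc := Module.Projective.of_free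
    obtain ⟨τ, hτ⟩ := dW.exists_rightInverse_of_surjective (LinearMap.range_eq_top.2 hsurj)
    refine ⟨(LinearMap.ker (p.f (a + 1)).hom).subtype ∘ₗ τ ∘ₗ π,
      fun x => (τ (π x)).2, fun _ z hz1 hz2 => ?_⟩
    have hzZ : z ∈ Zc := Submodule.mem_inf.2 ⟨hz1, hz2⟩
    have hπ : π z = ⟨z, hzZ⟩ := by
      have := Submodule.linearProjOfIsCompl_apply_left hC ⟨z, hzZ⟩
      exact this
    show X.d (a + 1) a ((LinearMap.ker (p.f (a + 1)).hom).subtype (τ (π z))) = z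
    rw [hπ]
    have h2 := LinearMap.congr_fun hτ ⟨z, hzZ⟩
    exact congrArg Subtype.val h2
  · exact ⟨0, fun x => by simp, fun h => absurd h hab⟩

end DegreewiseLLP9

open DegreewiseLLP9 in
set_option synthInstance.maxHeartbeats 1000000 in
set_option maxHeartbeats 2000000 in
theorem degreewise_injective_llp_against_trivial_fibrations
    {K : Type u} [Field K]
    {A B X Y : ChainComplex (ModuleCat.{u} K) ℤ}
    (i : A ⟶ B) (p : X ⟶ Y)
    (hi : ∀ n : ℤ, Function.Injective (i.f n))
    (hp : ∀ n : ℤ, Function.Surjective (p.f n))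
    (hq : QuasiIso p) :
    HasLiftingProperty i p := by
  constructor
  intro f g sq
  -- retraction of i
  have hretE : ∀ n : ℤ, ∃ r : B.X n →ₗ[K] A.X n,
      r ∘ₗ (i.f n).hom = LinearMap.id :=
    fun n => LinearMap.exists_leftInverse_of_injective (i.f n).hom (LinearMap.ker_eq_bot.2 (hi n))
  choose ret hret using hretE
  -- section of p
  have hsecE : ∀ n : ℤ, ∃ t : Y.X n →ₗ[K] X.X n,
      (p.f n).hom ∘ₗ t = LinearMap.id := fun n => by
    haveI : Module.Projective K (Y.X n) := Module.Projective.of_free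
    exact (p.f n).hom.exists_rightInverse_of_surjective
      (LinearMap.range_eq_top.2 (hp n))
  choose sec hsec using hsecE
  -- contraction data for the kernel of p
  choose s hs1 hs2 using exists_s p hp hq
  have hret' : ∀ n a, ret n (i.f n a) = a := fun n a => LinearMap.congr_fun (hret n) a
  have hsec' : ∀ n y, p.f n (sec n y) = y := fun n y => LinearMap.congr_fun (hsec n) y
  have hsq : ∀ n a, p.f n (f.f n a) = g.f n (i.f n a) := fun n a => by
    have h2 := congrArg (fun φ => HomologicalComplex.Hom.f φ n) sq.w
    have h3 := congrArg (fun φ => φ.hom a)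
      ((congrArg (fun φ => HomologicalComplex.Hom.f φ n) sq.w))
    exact h3
  -- the naive degreewise lift
  set q : ∀ n : ℤ, B.X n →ₗ[K] X.X n := fun n =>
    (f.f n).hom ∘ₗ ret n +
      (sec n) ∘ₗ ((g.f n).hom -
        (p.f n).hom ∘ₗ (f.f n).hom ∘ₗ ret n) with hq_def
  have hq1 : ∀ n b, p.f n (q n b) = g.f n b := fun n b => by
    show p.f n ((f.f n) (ret n b) + sec n ((g.f n) b - p.f n (f.f n (ret n b)))) = g.f n b
    rw [map_add, hsec']
    abel
  have hq2 : ∀ n a, q n (i.f n a) = f.f n a := by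
    intro n a
    show f.f n (ret n (i.f n a)) + sec n (g.f n (i.f n a) -
      p.f n (f.f n (ret n (i.f n a)))) = f.f n a
    rw [hret', ← hsq, sub_self, map_zero, add_zero]
  -- the defect of `q` being a chain map
  set e' : ∀ n : ℤ, B.X n →ₗ[K] X.X (n - 1) := fun n =>
    (X.d n (n - 1)).hom ∘ₗ q n -
      (q (n - 1)) ∘ₗ (B.d n (n - 1)).hom with he'_def
  -- the corrected contraction
  set Sc : ∀ a b : ℤ, X.X a →ₗ[K] X.X b := fun a b =>
    (s a b) ∘ₗ (2 • LinearMap.id -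
      ((X.d b a).hom ∘ₗ s a b +
        (s (a - 1) a) ∘ₗ (X.d a (a - 1)).hom)) with hSc_def
  have hScp : ∀ a b x, p.f b (Sc a b x) = 0 := fun a b x => by
    simp only [hSc_def, LinearMap.comp_apply]
    exact hs1 a b _
  have key : ∀ (a b : ℤ), a + 1 = b → ∀ w : X.X a, p.f a w = 0 →
      X.d b a (Sc a b w) = w - Sc (a - 1) a (X.d a (a - 1) w) := by
    intro a b hab w hw
    subst hab
    have hP2 := hs2 a (a + 1) rfl
    have hP2' := hs2 (a - 1) a (by ring)
    set dw := X.d a (a - 1) w with hdw_def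
    have hdw_p : p.f (a - 1) dw = 0 := by
      rw [hdw_def, comm_apply, hw, map_zero]
    have hdw_d : X.d (a - 1) (a - 1 - 1) dw = 0 := d_d a (a - 1) (a - 1 - 1) w
    have h1 : X.d a (a - 1) (s (a - 1) a dw) = dw := hP2' dw hdw_p hdw_d
    set e := X.d (a + 1) a (s a (a + 1) w) + s (a - 1) a dw with he_def
    have hep : p.f a e = 0 := by
      rw [he_def, map_add, comm_apply, hs1 a (a + 1), map_zero, hs1 (a - 1) a, add_zero]
    have hrp : p.f a (w - e) = 0 := by rw [map_sub, hw, hep, sub_zero]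
    have hrd : X.d a (a - 1) (w - e) = 0 := by
      rw [map_sub, he_def, map_add, d_d (a + 1) a (a - 1), h1, zero_add, sub_self]
    have h2 : X.d (a + 1) a (s a (a + 1) (w - e)) = w - e := hP2 (w - e) hrp hrd
    have hSc_w : Sc a (a + 1) w = s a (a + 1) w + s a (a + 1) (w - e) := by
      simp only [hSc_def, LinearMap.comp_apply, LinearMap.sub_apply, LinearMap.add_apply,
        LinearMap.smul_apply, LinearMap.id_apply]
      rw [← map_add]
      congr 1
      rw [two_smul, ← he_def]
      abel
    have hSc_dw : Sc (a - 1) a dw = s (a - 1) a dw := by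
      simp only [hSc_def, LinearMap.comp_apply, LinearMap.sub_apply, LinearMap.add_apply,
        LinearMap.smul_apply, LinearMap.id_apply]
      rw [h1, hdw_d, map_zero, add_zero, two_smul]
      congr 1
      abel
    rw [hSc_w, map_add, h2, hSc_dw, he_def]
    abel
  -- properties of the defect
  have hep' : ∀ n b, p.f (n - 1) (e' n b) = 0 := by
    intro n b
    simp only [he'_def, LinearMap.sub_apply, LinearMap.comp_apply, map_sub]
    rw [comm_apply p n (n - 1), hq1, hq1, comm_apply g n (n - 1), sub_self]
  have hei : ∀ n a, e' n (i.f n a) = 0 := by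
    intro n a
    simp only [he'_def, LinearMap.sub_apply, LinearMap.comp_apply]
    rw [hq2, ← comm_apply i n (n - 1), hq2, comm_apply f n (n - 1), sub_self]
  have hde : ∀ n b, X.d (n - 1) (n - 1 - 1) (e' n b) = - e' (n - 1) (B.d n (n - 1) b) := by
    intro n b
    simp only [he'_def, LinearMap.sub_apply, LinearMap.comp_apply, map_sub]
    rw [d_d n (n - 1) (n - 1 - 1), d_d n (n - 1) (n - 1 - 1) b, map_zero]
    abel
  -- the corrected lift
  set lft : ∀ n : ℤ, B.X n →ₗ[K] X.X n := fun n =>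
    q n - (Sc (n - 1) n) ∘ₗ e' n with hlft_def
  have main : ∀ (m n' : ℤ), n' + 1 = m → ∀ b : B.X m,
      X.d m n' (lft m b) = lft n' (B.d m n' b) := by
    intro m n' hmn b
    obtain rfl : n' = m - 1 := by omega
    simp only [hlft_def, LinearMap.sub_apply, LinearMap.comp_apply, map_sub]
    rw [key (m - 1) m (by ring) (e' m b) (hep' m b), hde, map_neg]
    have hexp : e' m b = X.d m (m - 1) (q m b) - q (m - 1) (B.d m (m - 1) b) := by
      simp only [he'_def, LinearMap.sub_apply, LinearMap.comp_apply]
    rw [hexp]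
    abel
  refine ⟨⟨⟨{ f := fun n => ModuleCat.ofHom (lft n), comm' := ?_ }, ?_, ?_⟩⟩⟩
  · intro m n' hrel
    have hmn : n' + 1 = m := hrel
    refine ModuleCat.hom_ext (LinearMap.ext fun b => ?_)
    exact main m n' hmn b
  · ext n a
    show lft n (i.f n a) = f.f n a
    simp only [hlft_def, LinearMap.sub_apply, LinearMap.comp_apply]
    rw [hq2, hei, map_zero, sub_zero]
  · ext n b
    show p.f n (lft n b) = g.f n b
    simp only [hlft_def, LinearMap.sub_apply, LinearMap.comp_apply, map_sub]
    rw [hq1, hScp, sub_zero]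
end

section
/- Let C be a complete and cocomplete closed symmetric monoidal category and f : 𝒳 ⥤ 𝒴 a functor between small groupoids. Endow the functor categories 𝒳 ⥤ C and 𝒴 ⥤ C with the objectwise tensor product. Then for every ℛ : 𝒳 ⥤ C and 𝒱 : 𝒴 ⥤ C there is an isomorphism f_!(ℛ ⊗ f^*𝒱) ≅ (f_! ℛ) ⊗ 𝒱, natural in ℛ and 𝒱 (the projection formula), where f^* denotes precomposition along f and f_! its left adjoint, left Kan extension along f. -/
/-!
STATEMENT 11: The projection formula: for a functor `f : 𝒳 ⥤ 𝒴` of small groupoids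
and a complete and cocomplete closed symmetric monoidal `C`, there is an isomorphism
`f_!(ℛ ⊗ f^*𝒱) ≅ (f_! ℛ) ⊗ 𝒱` natural in `ℛ : 𝒳 ⥤ C` and `𝒱 : 𝒴 ⥤ C`, where the
functor categories carry the objectwise tensor product.
-/

open CategoryTheory Limits MonoidalCategory

universe v u

namespace ProjFormulaAux

open CategoryTheory Category MonoidalClosed

section Conj

universe v₁ v₂ v₃ u₁ u₂ u₃
variable {C : Type u₁} {D : Type u₂} {E : Type u₃}
variable [Category.{v₁} C] [Category.{v₂} D] [Category.{v₃} E]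

theorem conjA {L : C ⥤ D} {R : D ⥤ C} (adj : L ⊣ R)
    {A B : E ⥤ C} {A' B' : C ⥤ E} (adjA : A ⊣ A') (adjB : B ⊣ B') (α : B ⟶ A) :
    conjugateEquiv (adjA.comp adj) (adjB.comp adj) (Functor.whiskerRight α L) =
      Functor.whiskerLeft R (conjugateEquiv adjA adjB α) := by
  ext d
  simp [conjugateEquiv, mateEquiv, Adjunction.comp]
  simp only [← Functor.map_comp]
  congr 1
  simp

theorem conjB {L : C ⥤ D} {R : D ⥤ C} (adj : L ⊣ R)
    {A B : D ⥤ E} {A' B' : E ⥤ D} (adjA : A ⊣ A') (adjB : B ⊣ B') (α : B ⟶ A) :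
    conjugateEquiv (adj.comp adjA) (adj.comp adjB) (Functor.whiskerLeft L α) =
      Functor.whiskerRight (conjugateEquiv adjA adjB α) R := by
  ext e
  simp [conjugateEquiv, mateEquiv, Adjunction.comp]
  slice_lhs 3 4 => rw [← Functor.map_comp, ← Functor.map_comp, ← α.naturality,
    Functor.map_comp, Functor.map_comp]
  slice_lhs 2 3 => rw [← Functor.map_comp, adjB.unit_naturality, Functor.map_comp]
  slice_lhs 1 2 => rw [adj.right_triangle_components]
  simp

end Conj

noncomputable section Groupoid

variable {D : Type v} [Groupoid.{v} D] {C : Type u} [Category.{v} C] [MonoidalCategory C]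
  [MonoidalClosed C]

lemma preP {F F' : D ⥤ C} (v : F ⟶ F') (W : D ⥤ C) (d : D) :
    ((MonoidalClosed.pre v).app W).app d = (MonoidalClosed.pre (v.app d)).app (W.obj d) := by
  apply MonoidalClosed.uncurry_injective (A := F.obj d) (X := W.obj d)
  erw [MonoidalClosed.uncurry_pre]
  erw [uncurry_eq]
  have h := congr_app (MonoidalClosed.id_tensor_pre_app_comp_ev v W) d
  simp only [Monoidal.tensorObj_obj, Monoidal.whiskerLeft_app, Monoidal.whiskerRight_app,
    Functor.ihom_ev_app, Functor.closedCounit_app_app] at h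
  exact h

variable {𝒳 𝒴 : Type v} [Groupoid.{v} 𝒳] [Groupoid.{v} 𝒴] (f : 𝒳 ⥤ 𝒴)

/-- The pointwise internal hom commutes with restriction along `f`. -/
def jIso (𝒱 : 𝒴 ⥤ C) :
    ihom 𝒱 ⋙ (Functor.whiskeringLeft 𝒳 𝒴 C).obj f ≅
      (Functor.whiskeringLeft 𝒳 𝒴 C).obj f ⋙ ihom (((Functor.whiskeringLeft 𝒳 𝒴 C).obj f).obj 𝒱) :=
  NatIso.ofComponents
    (fun W => NatIso.ofComponents (fun x => Iso.refl _) (by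
      intro x x' h
      simp only [Iso.refl_hom, Category.comp_id, Category.id_comp]
      erw [Category.id_comp]
      erw [Category.comp_id]
      show ((Functor.closedIhom 𝒱).obj W).map (f.map h) =
        ((Functor.closedIhom (f ⋙ 𝒱)).obj (f ⋙ W)).map h
      simp [Groupoid.inv_eq_inv, Functor.map_inv]
      rfl))
    (by
      intro W W' w
      ext x
      simp only [Functor.comp_obj, Functor.comp_map, Functor.whiskeringLeft_obj_obj,
        NatTrans.comp_app, NatIso.ofComponents_hom_app, Iso.refl_hom, Functor.whiskerLeft_app,
        Category.comp_id, Category.id_comp]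
      erw [Category.comp_id, Category.id_comp]
      show ((Functor.closedIhom 𝒱).map w).app (f.obj x) =
        ((Functor.closedIhom (f ⋙ 𝒱)).map (Functor.whiskerLeft f w)).app x
      simp
      rfl)



/-- `f_!(- ⊗ f^*𝒱) ⊣ f^* ∘ [f^*𝒱, -]`. -/
def Adj1 (L : (𝒳 ⥤ C) ⥤ (𝒴 ⥤ C)) (adj : L ⊣ (Functor.whiskeringLeft 𝒳 𝒴 C).obj f)
    (𝒱 : 𝒴 ⥤ C) :
    tensorLeft (((Functor.whiskeringLeft 𝒳 𝒴 C).obj f).obj 𝒱) ⋙ L ⊣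
      (Functor.whiskeringLeft 𝒳 𝒴 C).obj f ⋙ ihom (((Functor.whiskeringLeft 𝒳 𝒴 C).obj f).obj 𝒱) :=
  (ihom.adjunction _).comp adj

/-- `(f_! -) ⊗ 𝒱 ⊣ [𝒱, -] ∘ f^*`. -/
def Adj2 (L : (𝒳 ⥤ C) ⥤ (𝒴 ⥤ C)) (adj : L ⊣ (Functor.whiskeringLeft 𝒳 𝒴 C).obj f)
    (𝒱 : 𝒴 ⥤ C) :
    L ⋙ tensorLeft 𝒱 ⊣ ihom 𝒱 ⋙ (Functor.whiskeringLeft 𝒳 𝒴 C).obj f :=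
  adj.comp (ihom.adjunction 𝒱)

/-- The projection morphism, as conjugate of `jIso`. -/
def φ (L : (𝒳 ⥤ C) ⥤ (𝒴 ⥤ C)) (adj : L ⊣ (Functor.whiskeringLeft 𝒳 𝒴 C).obj f) (𝒱 : 𝒴 ⥤ C) :
    tensorLeft (((Functor.whiskeringLeft 𝒳 𝒴 C).obj f).obj 𝒱) ⋙ L ⟶ L ⋙ tensorLeft 𝒱 :=
  (conjugateEquiv (Adj2 f L adj 𝒱) (Adj1 f L adj 𝒱)).symm (jIso f 𝒱).hom

instance (L : (𝒳 ⥤ C) ⥤ (𝒴 ⥤ C)) (adj : L ⊣ (Functor.whiskeringLeft 𝒳 𝒴 C).obj f) (𝒱 : 𝒴 ⥤ C) :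
    IsIso (φ f L adj 𝒱) := by
  unfold φ
  infer_instance

theorem key (L : (𝒳 ⥤ C) ⥤ (𝒴 ⥤ C)) (adj : L ⊣ (Functor.whiskeringLeft 𝒳 𝒴 C).obj f)
    {𝒱 𝒱' : 𝒴 ⥤ C} (v : 𝒱 ⟶ 𝒱') :
    Functor.whiskerRight ((curriedTensor (𝒳 ⥤ C)).map (((Functor.whiskeringLeft 𝒳 𝒴 C).obj f).map v)) L ≫
        φ f L adj 𝒱' =
      φ f L adj 𝒱 ≫ Functor.whiskerLeft L ((curriedTensor (𝒴 ⥤ C)).map v) := by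
  apply (conjugateEquiv (Adj2 f L adj 𝒱') (Adj1 f L adj 𝒱)).injective
  rw [← conjugateEquiv_comp (Adj2 f L adj 𝒱') (Adj1 f L adj 𝒱') (Adj1 f L adj 𝒱)
        (φ f L adj 𝒱') (Functor.whiskerRight ((curriedTensor (𝒳 ⥤ C)).map
          (((Functor.whiskeringLeft 𝒳 𝒴 C).obj f).map v)) L),
      ← conjugateEquiv_comp (Adj2 f L adj 𝒱') (Adj2 f L adj 𝒱) (Adj1 f L adj 𝒱)
        (Functor.whiskerLeft L ((curriedTensor (𝒴 ⥤ C)).map v)) (φ f L adj 𝒱)]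
  show conjugateEquiv (Adj2 f L adj 𝒱') (Adj1 f L adj 𝒱')
        ((conjugateEquiv (Adj2 f L adj 𝒱') (Adj1 f L adj 𝒱')).symm (jIso f 𝒱').hom) ≫ _ =
      _ ≫ conjugateEquiv (Adj2 f L adj 𝒱) (Adj1 f L adj 𝒱)
        ((conjugateEquiv (Adj2 f L adj 𝒱) (Adj1 f L adj 𝒱)).symm (jIso f 𝒱).hom)
  rw [Equiv.apply_symm_apply, Equiv.apply_symm_apply]
  rw [show conjugateEquiv (Adj1 f L adj 𝒱') (Adj1 f L adj 𝒱)
        (Functor.whiskerRight ((curriedTensor (𝒳 ⥤ C)).map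
          (((Functor.whiskeringLeft 𝒳 𝒴 C).obj f).map v)) L) =
      Functor.whiskerLeft ((Functor.whiskeringLeft 𝒳 𝒴 C).obj f)
        (MonoidalClosed.pre (((Functor.whiskeringLeft 𝒳 𝒴 C).obj f).map v)) from
    conjA adj (ihom.adjunction _) (ihom.adjunction _) _]
  rw [show conjugateEquiv (Adj2 f L adj 𝒱') (Adj2 f L adj 𝒱)
        (Functor.whiskerLeft L ((curriedTensor (𝒴 ⥤ C)).map v)) =
      Functor.whiskerRight (MonoidalClosed.pre v) ((Functor.whiskeringLeft 𝒳 𝒴 C).obj f) from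
    conjB adj (ihom.adjunction _) (ihom.adjunction _) _]
  ext W x
  simp only [jIso, NatTrans.comp_app, NatIso.ofComponents_hom_app, Functor.comp_obj,
    Functor.whiskeringLeft_obj_obj, Iso.refl_hom, Functor.whiskerLeft_app, Functor.whiskerRight_app,
    Category.comp_id, Category.id_comp]
  erw [Category.comp_id, Category.id_comp]
  rw [preP, show (((Functor.whiskeringLeft 𝒳 𝒴 C).obj f).map ((MonoidalClosed.pre v).app W)).app x =
      ((MonoidalClosed.pre v).app W).app (f.obj x) from rfl, preP]
  rfl

end Groupoid

end ProjFormulaAux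

theorem projection_formula
    {C : Type u} [Category.{v} C] [MonoidalCategory C] [SymmetricCategory C]
    [MonoidalClosed C] [HasLimits C] [HasColimits C]
    {𝒳 𝒴 : Type v} [Groupoid.{v} 𝒳] [Groupoid.{v} 𝒴] (f : 𝒳 ⥤ 𝒴)
    -- `f_!`, the left adjoint to precomposition `f^*` (left Kan extension along `f`)
    (L : (𝒳 ⥤ C) ⥤ (𝒴 ⥤ C))
    (adj : L ⊣ (Functor.whiskeringLeft 𝒳 𝒴 C).obj f) :
    -- the isomorphism `f_!(ℛ ⊗ f^*𝒱) ≅ (f_! ℛ) ⊗ 𝒱`, natural in `ℛ` and `𝒱`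
    Nonempty
      ((curriedTensor (𝒳 ⥤ C) ⋙
          (Functor.whiskeringLeft (𝒴 ⥤ C) (𝒳 ⥤ C) (𝒳 ⥤ C)).obj
            ((Functor.whiskeringLeft 𝒳 𝒴 C).obj f) ⋙
          (Functor.whiskeringRight (𝒴 ⥤ C) (𝒳 ⥤ C) (𝒴 ⥤ C)).obj L) ≅
        (L ⋙ curriedTensor (𝒴 ⥤ C))) := by
  constructor
  refine NatIso.ofComponents (fun ℛ => NatIso.ofComponents
    (fun 𝒱 => L.mapIso (β_ ℛ (((Functor.whiskeringLeft 𝒳 𝒴 C).obj f).obj 𝒱)) ≪≫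
      asIso ((ProjFormulaAux.φ f L adj 𝒱).app ℛ) ≪≫ β_ 𝒱 (L.obj ℛ)) ?_) ?_
  · intro 𝒱 𝒱' v
    dsimp
    have k := congr_app (ProjFormulaAux.key f L adj v) ℛ
    dsimp at k
    rw [← L.map_comp_assoc, BraidedCategory.braiding_naturality_right,
      L.map_comp_assoc, reassoc_of% k,
      BraidedCategory.braiding_naturality_left v (L.obj ℛ)]
    simp
  · intro ℛ ℛ' r
    ext 𝒱 : 2
    dsimp
    have k := (ProjFormulaAux.φ f L adj 𝒱).naturality r
    dsimp at k
    rw [← L.map_comp_assoc, BraidedCategory.braiding_naturality_left,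
      L.map_comp_assoc, reassoc_of% k, BraidedCategory.braiding_naturality_right]
    simp
end

section
/- Let C be a complete and cocomplete closed symmetric monoidal category and f : 𝒳 ⥤ 𝒴 a functor between small groupoids. Endow the functor categories 𝒳 ⥤ C and 𝒴 ⥤ C with the objectwise tensor product; these are closed monoidal, with internal hom denoted [−,−]. Then precomposition f^* is a closed functor: for all 𝒱, 𝒲 : 𝒴 ⥤ C the canonical morphism f^*[𝒱, 𝒲] → [f^*𝒱, f^*𝒲] is an isomorphism, natural in 𝒱 and 𝒲. -/
/-!
STATEMENT 12: For a functor `f : 𝒳 ⥤ 𝒴` of small groupoids and a complete and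
cocomplete closed symmetric monoidal category `C`, precomposition `f^*` is a closed
functor: the canonical morphism `f^*[𝒱, 𝒲] ⟶ [f^*𝒱, f^*𝒲]` is an isomorphism,
naturally in `𝒱` and `𝒲`.
-/

open CategoryTheory Limits MonoidalCategory MonoidalClosed

universe v u

variable {C : Type u} [Category.{v} C] [MonoidalCategory C] [SymmetricCategory C]
  [MonoidalClosed C] [HasLimits C] [HasColimits C]
  {𝒳 𝒴 : Type v} [Groupoid.{v} 𝒳] [Groupoid.{v} 𝒴]

/-- The canonical comparison morphism `f^*[𝒱, 𝒲] ⟶ [f^*𝒱, f^*𝒲]`, obtained by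
currying the precomposition with `f` of the evaluation morphism
`𝒱 ⊗ [𝒱, 𝒲] ⟶ 𝒲`. -/
noncomputable def pullbackIhomComparison (f : 𝒳 ⥤ 𝒴) (𝒱 𝒲 : 𝒴 ⥤ C) :
    (f ⋙ (ihom 𝒱).obj 𝒲) ⟶ (ihom (f ⋙ 𝒱)).obj (f ⋙ 𝒲) :=
  MonoidalClosed.curry
    ((CategoryTheory.Functor.whiskerLeft f ((ihom.ev 𝒱).app 𝒲) :
      (f ⋙ 𝒱) ⊗ (f ⋙ (ihom 𝒱).obj 𝒲) ⟶ (f ⋙ 𝒲)))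

set_option linter.unusedSectionVars false in
/-- Componentwise, the comparison morphism is the identity. -/
theorem pullbackIhomComparison_app (f : 𝒳 ⥤ 𝒴) (𝒱 𝒲 : 𝒴 ⥤ C) (x : 𝒳) :
    (pullbackIhomComparison f 𝒱 𝒲).app x = 𝟙 _ := by
  unfold pullbackIhomComparison
  erw [MonoidalClosed.curry_eq]
  erw [NatTrans.comp_app,
    Functor.ihom_coev_app, Functor.ihom_map, Functor.ihom_ev_app]
  dsimp [Functor.closedIhom, Functor.closedCounit, Functor.whiskeringRight₂,
    MonoidalClosed.internalHom]
  dsimp [Functor.closedUnit, Functor.curry, Functor.uncurry]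
  dsimp [Functor.curryObj]
  show (ihom.coev (𝒱.obj (f.obj x))).app (((ihom 𝒱).obj 𝒲).obj (f.obj x)) ≫ ((pre _).app _ ≫ (ihom (𝒱.obj (f.obj x))).map ((ihom.ev (𝒱.obj (f.obj x))).app (𝒲.obj (f.obj x)))) = 𝟙 _
  simp [NatTrans.prod']
  erw [MonoidalClosed.pre_id, NatTrans.id_app, Category.id_comp]
  exact ihom.coev_ev (𝒱.obj (f.obj x)) (𝒲.obj (f.obj x))

set_option linter.unusedSectionVars false in
/-- Componentwise formula for `ihom` on morphisms in the functor category. -/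
theorem ihom_map_app' {D : Type v} [Groupoid.{v} D] (𝒱 : D ⥤ C) {𝒲 𝒲' : D ⥤ C}
    (β : 𝒲 ⟶ 𝒲') (y : D) :
    ((ihom 𝒱).map β).app y = (ihom (𝒱.obj y)).map (β.app y) := by
  rw [Functor.ihom_map]
  dsimp [Functor.closedIhom, Functor.whiskeringRight₂, MonoidalClosed.internalHom]
  simp
  rfl

set_option linter.unusedSectionVars false in
/-- Componentwise formula for `MonoidalClosed.pre` in the functor category. -/
theorem pre_app_app' {D : Type v} [Groupoid.{v} D] {𝒱 𝒱' : D ⥤ C} (α : 𝒱' ⟶ 𝒱)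
    (𝒲 : D ⥤ C) (y : D) :
    ((MonoidalClosed.pre α).app 𝒲).app y = (MonoidalClosed.pre (α.app y)).app (𝒲.obj y) := by
  apply MonoidalClosed.uncurry_injective
  conv_rhs => erw [MonoidalClosed.uncurry_pre (α.app y) (𝒲.obj y)]
  erw [MonoidalClosed.uncurry_eq]
  have h := NatTrans.congr_app (MonoidalClosed.id_tensor_pre_app_comp_ev α 𝒲) y
  rw [Functor.ihom_ev_app] at h
  dsimp [Functor.closedCounit] at h
  exact h

/-- **Precomposition along a functor of groupoids is a closed functor.**
The canonical morphism `f^*[𝒱, 𝒲] ⟶ [f^*𝒱, f^*𝒲]` is an isomorphism, and it is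
natural in `𝒲` (covariantly) and in `𝒱` (contravariantly). -/
theorem pullbackIhomComparison_isIso_and_natural (f : 𝒳 ⥤ 𝒴) :
    (∀ (𝒱 𝒲 : 𝒴 ⥤ C), IsIso (pullbackIhomComparison f 𝒱 𝒲)) ∧
    -- naturality in 𝒲
    (∀ (𝒱 : 𝒴 ⥤ C) {𝒲 𝒲' : 𝒴 ⥤ C} (β : 𝒲 ⟶ 𝒲'),
      pullbackIhomComparison f 𝒱 𝒲 ≫ (ihom (f ⋙ 𝒱)).map (CategoryTheory.Functor.whiskerLeft f β) =
        CategoryTheory.Functor.whiskerLeft f ((ihom 𝒱).map β) ≫ pullbackIhomComparison f 𝒱 𝒲') ∧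
    -- naturality in 𝒱
    (∀ {𝒱 𝒱' : 𝒴 ⥤ C} (α : 𝒱' ⟶ 𝒱) (𝒲 : 𝒴 ⥤ C),
      pullbackIhomComparison f 𝒱 𝒲 ≫
          (MonoidalClosed.pre (CategoryTheory.Functor.whiskerLeft f α)).app (f ⋙ 𝒲) =
        CategoryTheory.Functor.whiskerLeft f ((MonoidalClosed.pre α).app 𝒲) ≫
          pullbackIhomComparison f 𝒱' 𝒲) := by
  refine ⟨fun 𝒱 𝒲 => ?_, fun 𝒱 {𝒲 𝒲'} β => ?_, fun {𝒱 𝒱'} α 𝒲 => ?_⟩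
  · have : ∀ x, IsIso ((pullbackIhomComparison f 𝒱 𝒲).app x) := fun x => by
      rw [pullbackIhomComparison_app]; exact IsIso.id _
    exact NatIso.isIso_of_isIso_app _
  · ext x
    rw [NatTrans.comp_app, NatTrans.comp_app, pullbackIhomComparison_app,
      pullbackIhomComparison_app]
    erw [Category.id_comp, Category.comp_id]
    rw [CategoryTheory.Functor.whiskerLeft_app]
    erw [ihom_map_app']
  · ext x
    rw [NatTrans.comp_app, NatTrans.comp_app, pullbackIhomComparison_app,
      pullbackIhomComparison_app]
    erw [Category.id_comp, Category.comp_id]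
    rw [CategoryTheory.Functor.whiskerLeft_app]
    erw [pre_app_app']
end
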